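/- Let T be a labelled rooted tree with at least two vertices and G = U(T). Then the simplicial map U : X^T → X^G is not relatively Segal: the square comparing the Segal maps (d_0, d_2) : X^T_2 → X^T_1 × X^T_1 and (d_0, d_2) : X^G_2 → X^G_1 × X^G_1 via U is not a pullback of sets. -/

import Mathlib

/-- A finite rooted tree, encoded as a finite partial order with a least element
(the root) in which the set of elements below any given vertex is totally
ordered.  Edges of the tree are the covering pairs of the order. -/
structure CutTree where
  V : Type
  [fintypeV : Fintype V]
  [decEq : DecidableEq V]
  [po : PartialOrder V]
  root : V
  root_le : ∀ v : V, root ≤ v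
  lower_total : ∀ v a b : V, a ≤ v → b ≤ v → a ≤ b ∨ b ≤ a

attribute [instance] CutTree.fintypeV CutTree.decEq CutTree.po

namespace CutTree

variable (T : CutTree)

/-- A subset of the vertices defines a lower subtree when it is downward closed. -/
def IsLower (L : Set T.V) : Prop := ∀ ⦃a b : T.V⦄, a ≤ b → b ∈ L → a ∈ L

/-- `L` defines a lower subforest of the admissible subforest with vertex set `H`. -/
def IsLowerIn (H L : Set T.V) : Prop :=
  L ⊆ H ∧ ∀ ⦃a b : T.V⦄, a ∈ H → b ∈ L → a ≤ b → a ∈ L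

/-- `H` is the vertex set of an admissible subforest: a difference of two nested
downward closed sets. -/
def IsAdmissible (H : Set T.V) : Prop :=
  ∃ A B : Set T.V, T.IsLower A ∧ T.IsLower B ∧ B ⊆ A ∧ H = A \ B

theorem isLower_empty : T.IsLower (∅ : Set T.V) := fun _ _ _ h => h.elim

theorem isAdmissible_empty : T.IsAdmissible (∅ : Set T.V) :=
  ⟨∅, ∅, T.isLower_empty, T.isLower_empty, le_rfl, by simp⟩

/-- An `n`-simplex of the 2-Segal set `X^T`: an admissible subforest `H = L 0`
together with a layering of cuts `H = L 0 ⊇ L 1 ⊇ ⋯ ⊇ L n = ∅` by lower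
subforests of `H`. -/
@[ext]
structure Simplex (T : CutTree) (n : ℕ) where
  L : Fin (n + 1) → Set T.V
  admissible : T.IsAdmissible (L 0)
  antitone : Antitone L
  lowerIn : ∀ i, T.IsLowerIn (L 0) (L i)
  last_eq : L (Fin.last n) = ∅

theorem isAdmissible_diff {H P Q : Set T.V} (hH : T.IsAdmissible H)
    (hP : T.IsLowerIn H P) (hQ : T.IsLowerIn H Q) (hQP : Q ⊆ P) :
    T.IsAdmissible (P \ Q) := by
  obtain ⟨A, B, hA, hB, hBA, rfl⟩ := hH
  have hlow : ∀ R : Set T.V, T.IsLowerIn (A \ B) R → T.IsLower (R ∪ B) := by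
    rintro R ⟨hRsub, hRcl⟩ a b hab hb
    rcases hb with hb | hb
    · have hbA : b ∈ A := (hRsub hb).1
      have haA : a ∈ A := hA hab hbA
      by_cases haB : a ∈ B
      · exact Or.inr haB
      · exact Or.inl (hRcl ⟨haA, haB⟩ hb hab)
    · exact Or.inr (hB hab hb)
  refine ⟨P ∪ B, Q ∪ B, hlow P hP, hlow Q hQ, Set.union_subset_union_left _ hQP, ?_⟩
  ext x
  constructor
  · rintro ⟨hxP, hxQ⟩
    have hxB : x ∉ B := (hP.1 hxP).2
    exact ⟨Or.inl hxP, by rintro (h | h) <;> [exact hxQ h; exact hxB h]⟩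
  · rintro ⟨hx1, hx2⟩
    rcases hx1 with hx1 | hx1
    · exact ⟨hx1, fun h => hx2 (Or.inl h)⟩
    · exact absurd (Or.inr hx1) hx2

/-- The action of a simplicial operator `α : [m] → [n]` on `X^T`. -/
def act {m n : ℕ} (α : Fin (m + 1) → Fin (n + 1)) (hα : Monotone α)
    (σ : T.Simplex n) : T.Simplex m where
  L j := σ.L (α j) \ σ.L (α (Fin.last m))
  admissible := by
    refine T.isAdmissible_diff σ.admissible (σ.lowerIn _) (σ.lowerIn _) ?_
    exact σ.antitone (hα (Fin.le_last _))
  antitone := by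
    intro j k hjk
    exact Set.diff_subset_diff_left (σ.antitone (hα hjk))
  lowerIn := by
    intro i
    constructor
    · exact Set.diff_subset_diff_left (σ.antitone (hα (Fin.zero_le _)))
    · rintro a b ⟨haL, haS⟩ ⟨hbL, _⟩ hab
      have ha0 : a ∈ σ.L 0 := (σ.lowerIn (α 0)).1 haL
      exact ⟨(σ.lowerIn (α i)).2 ha0 hbL hab, haS⟩
  last_eq := Set.diff_self

/-- The `i`-th face map `X^T_{n+1} → X^T_n`. -/
def face {n : ℕ} (i : Fin (n + 2)) : T.Simplex (n + 1) → T.Simplex n :=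
  T.act i.succAbove (Fin.strictMono_succAbove i).monotone

/-- The `i`-th degeneracy map `X^T_n → X^T_{n+1}`. -/
def degen {n : ℕ} (i : Fin (n + 1)) : T.Simplex n → T.Simplex (n + 1) :=
  T.act i.predAbove (Fin.predAbove_right_monotone i)

end CutTree


section GraphCore

variable {V : Type}

theorem telescope_iUnion {m : ℕ} (M : Fin (m + 1) → Set V) (hM : Antitone M) :
    (⋃ j : Fin m, (M j.castSucc \ M j.succ)) = M 0 \ M (Fin.last m) := by
  ext x
  simp only [Set.mem_iUnion, Set.mem_diff]
  constructor
  · rintro ⟨j, hj1, hj2⟩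
    refine ⟨hM (Fin.zero_le _) hj1, fun hx => hj2 (hM (Fin.le_last _) hx)⟩
  · rintro ⟨h0, hlast⟩
    by_contra hno
    push_neg at hno
    have hall : ∀ j : Fin (m + 1), x ∈ M j := by
      intro j
      induction j using Fin.induction with
      | zero => exact h0
      | succ j ih => exact (hno j ih)
    exact hlast (hall _)

theorem disjoint_layers {m : ℕ} (M : Fin (m + 1) → Set V) (hM : Antitone M) :
    ∀ i j : Fin m, i ≠ j →
      Disjoint (M i.castSucc \ M i.succ) (M j.castSucc \ M j.succ) := by
  have key : ∀ i j : Fin m, i < j →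
      Disjoint (M i.castSucc \ M i.succ) (M j.castSucc \ M j.succ) := by
    intro i j hij
    rw [Set.disjoint_left]
    rintro x ⟨_, hxi⟩ ⟨hxj, _⟩
    have : M j.castSucc ⊆ M i.succ := hM (by
      rw [Fin.succ_le_castSucc_iff]; exact hij)
    exact hxi (this hxj)
  intro i j hij
  rcases lt_or_gt_of_ne hij with h | h
  · exact key i j h
  · exact (key j i h).symm

/-- An `n`-simplex of the 2-Segal set `X^G` of a graph `G`: a subgraph `H`
together with an ordered partition of its vertices into `n` possibly empty
parts. -/
@[ext]
structure GSimplex {V : Type} (G : SimpleGraph V) (n : ℕ) where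
  H : G.Subgraph
  S : Fin n → Set V
  cover : (⋃ i, S i) = H.verts
  disj : ∀ i j : Fin n, i ≠ j → Disjoint (S i) (S j)

namespace GSimplex

variable {G : SimpleGraph V}

/-- The chain of "remaining" vertex sets of a partitioned subgraph:
`chain σ j` is the union of the parts with index `≥ j`. -/
def chain {n : ℕ} (σ : GSimplex G n) (j : Fin (n + 1)) : Set V :=
  ⋃ k : Fin n, if j ≤ k.castSucc then σ.S k else ∅

theorem chain_antitone {n : ℕ} (σ : GSimplex G n) : Antitone σ.chain := by
  intro j j' hjj'
  refine Set.iUnion_subset fun k => ?_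
  by_cases h : j' ≤ k.castSucc
  · simp only [h, if_pos]
    exact Set.subset_iUnion_of_subset k (by simp [hjj'.trans h])
  · simp [h]

theorem chain_zero {n : ℕ} (σ : GSimplex G n) : σ.chain 0 = σ.H.verts := by
  rw [← σ.cover]
  unfold chain

  ext k
  simp [Fin.zero_le]

theorem chain_last {n : ℕ} (σ : GSimplex G n) : σ.chain (Fin.last n) = ∅ := by
  unfold chain
  ext x
  simp only [Set.mem_iUnion, Set.mem_empty_iff_false, iff_false]
  rintro ⟨k, hk⟩
  rw [if_neg] at hk
  · exact hk
  · exact not_le.mpr (Fin.castSucc_lt_last k)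

/-- The action of a simplicial operator `α : [m] → [n]` on `X^G`:
the parts are merged or deleted according to `α`, and the subgraph is replaced
by its restriction (spanned subgraph) to the remaining vertices. -/
def act {m n : ℕ} (α : Fin (m + 1) → Fin (n + 1)) (hα : Monotone α)
    (σ : GSimplex G n) : GSimplex G m where
  H := σ.H.induce (σ.chain (α 0) \ σ.chain (α (Fin.last m)))
  S j := σ.chain (α j.castSucc) \ σ.chain (α j.succ)
  cover := by
    have := telescope_iUnion (fun j => σ.chain (α j)) (σ.chain_antitone.comp_monotone hα)
    simpa using this
  disj := disjoint_layers (fun j => σ.chain (α j)) (σ.chain_antitone.comp_monotone hα)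

/-- The `i`-th face map `X^G_{n+1} → X^G_n`. -/
def face {n : ℕ} (i : Fin (n + 2)) : GSimplex G (n + 1) → GSimplex G n :=
  act i.succAbove (Fin.strictMono_succAbove i).monotone

/-- The `i`-th degeneracy map `X^G_n → X^G_{n+1}`. -/
def degen {n : ℕ} (i : Fin (n + 1)) : GSimplex G n → GSimplex G (n + 1) :=
  act i.predAbove (Fin.predAbove_right_monotone i)

/-- The element of `X^G_1` corresponding to a subgraph `H` of `G`. -/
def ofSubgraph (H : G.Subgraph) : GSimplex G 1 where
  H := H
  S := fun _ => H.verts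
  cover := Set.iUnion_const _
  disj := fun i j hij => absurd (Subsingleton.elim i j) hij

end GSimplex

end GraphCore

namespace CutTree

variable (T : CutTree)

/-- The underlying (simple) graph of a rooted tree: the edges are the covering
pairs of the order. -/
def underlying : SimpleGraph T.V := SimpleGraph.fromRel (fun a b => a ⋖ b)

/-- The simplicial map `U : X^T → X^G` sending a layered admissible subforest to
its underlying subgraph together with the vertex partition given by the layers. -/
def Umap {n : ℕ} (σ : T.Simplex n) : GSimplex T.underlying n where
  H := (⊤ : T.underlying.Subgraph).induce (σ.L 0)
  S j := σ.L j.castSucc \ σ.L j.succ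
  cover := by
    have := telescope_iUnion σ.L σ.antitone
    rw [this, σ.last_eq]
    simp [SimpleGraph.Subgraph.induce_verts]
  disj := disjoint_layers σ.L σ.antitone

/-- The degree of a vertex in (the underlying graph of) a rooted tree. -/
noncomputable def degree (v : T.V) : ℕ := Nat.card {w : T.V // v ⋖ w ∨ w ⋖ v}

end CutTree

/-!
Subgraphs in the image of `U` are induced, while a 2-simplex of `X^G` may be an arbitrary
subgraph. Take an edge `u ⋖ w` of `T` and the 2-simplex `b` of `X^G` whose subgraph is
`{u, w}` without the edge, partitioned as `{w}, {u}`. Its outer faces `d₀ b` and `d₂ b` are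
the singleton subgraphs `{u}` and `{w}`, which are the images of the singleton subforests of
`T`; but `b` itself is not induced, so it has no preimage in `X^T_2`.
-/

namespace SimpleGraph.Subgraph

variable {V : Type} {G : SimpleGraph V}

theorem induce_sup_verts_left {H K : G.Subgraph} (h : Disjoint H.verts K.verts) :
    (H ⊔ K).induce H.verts = H := by
  refine Subgraph.ext (by simp) (funext₂ fun x y => propext ?_)
  simp only [induce_adj, sup_adj]
  constructor
  · rintro ⟨hx, -, hH | hK⟩
    · exact hH
    · exact absurd (K.edge_vert hK) (Set.disjoint_left.mp h hx)
  · exact fun hH => ⟨H.edge_vert hH, H.edge_vert hH.symm, Or.inl hH⟩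

theorem induce_sup_verts_right {H K : G.Subgraph} (h : Disjoint H.verts K.verts) :
    (H ⊔ K).induce K.verts = K := by
  rw [sup_comm]
  exact induce_sup_verts_left h.symm

theorem not_isInduced_singletonSubgraph_sup {u w : V} (huw : G.Adj u w) :
    ¬ (G.singletonSubgraph u ⊔ G.singletonSubgraph w).IsInduced := by
  intro hind
  simpa using hind (by simp) (by simp) huw

end SimpleGraph.Subgraph

namespace GSimplex

variable {V : Type} {G : SimpleGraph V}

theorem eq_ofSubgraph (τ : GSimplex G 1) : τ = ofSubgraph τ.H := by
  refine GSimplex.ext rfl (funext fun j => ?_)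
  rw [Subsingleton.elim j 0]
  change τ.S 0 = τ.H.verts
  rw [← τ.cover]
  exact (iSup_unique τ.S).symm

theorem chain_one (σ : GSimplex G 2) : σ.chain 1 = σ.S 1 := by
  ext x
  simp [chain, Fin.exists_fin_two, Fin.le_def]

theorem face_zero_eq (σ : GSimplex G 2) : face 0 σ = ofSubgraph (σ.H.induce (σ.S 1)) := by
  rw [eq_ofSubgraph (face 0 σ)]
  change ofSubgraph (σ.H.induce (σ.chain 1 \ σ.chain 2)) = _
  rw [chain_one, show (2 : Fin 3) = Fin.last 2 from rfl, chain_last, Set.sdiff_empty]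

theorem face_two_eq (σ : GSimplex G 2) : face 2 σ = ofSubgraph (σ.H.induce (σ.S 0)) := by
  rw [eq_ofSubgraph (face 2 σ)]
  change ofSubgraph (σ.H.induce (σ.chain 0 \ σ.chain 1)) = _
  have hverts : σ.H.verts = σ.S 0 ∪ σ.S 1 := by
    rw [← σ.cover]
    ext x
    simp [Fin.exists_fin_two]
  rw [chain_zero, chain_one, hverts, Set.union_sdiff_right,
    (σ.disj 0 1 (by decide)).sdiff_eq_left]

def ofDisjoint (H K : G.Subgraph) (h : Disjoint H.verts K.verts) : GSimplex G 2 where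
  H := H ⊔ K
  S := ![H.verts, K.verts]
  cover := by
    ext x
    simp [Fin.exists_fin_two]
  disj i j hij := by
    fin_cases i <;> fin_cases j
    exacts [absurd rfl hij, h, h.symm, absurd rfl hij]

theorem face_zero_ofDisjoint (H K : G.Subgraph) (h : Disjoint H.verts K.verts) :
    face 0 (ofDisjoint H K h) = ofSubgraph K := by
  rw [face_zero_eq]
  exact congrArg ofSubgraph (SimpleGraph.Subgraph.induce_sup_verts_right h)

theorem face_two_ofDisjoint (H K : G.Subgraph) (h : Disjoint H.verts K.verts) :
    face 2 (ofDisjoint H K h) = ofSubgraph H := by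
  rw [face_two_eq]
  exact congrArg ofSubgraph (SimpleGraph.Subgraph.induce_sup_verts_left h)

end GSimplex

namespace CutTree

variable (T : CutTree)

theorem exists_covBy (hT : 1 < Nat.card T.V) : ∃ u w : T.V, u ⋖ w := by
  have : Nontrivial T.V := Finite.one_lt_card_iff_nontrivial.mp hT
  obtain ⟨v, hv⟩ := exists_ne T.root
  obtain ⟨w, hw, -⟩ := exists_covBy_le_of_lt ((T.root_le v).lt_of_ne hv.symm)
  exact ⟨T.root, w, hw⟩

theorem underlying_adj_of_covBy {u w : T.V} (h : u ⋖ w) : T.underlying.Adj u w :=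
  (SimpleGraph.fromRel_adj _ _ _).mpr ⟨h.ne, Or.inl h⟩

theorem isAdmissible_singleton (x : T.V) : T.IsAdmissible {x} := by
  refine ⟨Set.Iic x, Set.Iio x, fun _ _ => le_trans, fun _ _ => lt_of_le_of_lt,
    Set.Iio_subset_Iic_self, ?_⟩
  rw [Set.Iic_sdiff_Iio_same]

def ofAdmissible (H : Set T.V) (hH : T.IsAdmissible H) : T.Simplex 1 where
  L := ![H, ∅]
  admissible := hH
  antitone := by
    intro i j hij
    fin_cases i <;> fin_cases j <;> simp_all
  lowerIn i := by
    fin_cases i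
    · exact ⟨subset_rfl, fun a _ ha _ _ => ha⟩
    · exact ⟨Set.empty_subset _, fun _ _ _ hb _ => hb.elim⟩
  last_eq := rfl

theorem Umap_ofAdmissible_singleton (x : T.V) :
    T.Umap (T.ofAdmissible {x} (T.isAdmissible_singleton x)) =
      GSimplex.ofSubgraph (T.underlying.singletonSubgraph x) := by
  rw [GSimplex.eq_ofSubgraph (T.Umap _)]
  exact congrArg GSimplex.ofSubgraph SimpleGraph.Subgraph.singletonSubgraph_eq_induce.symm

theorem isInduced_Umap {n : ℕ} (σ : T.Simplex n) : (T.Umap σ).H.IsInduced :=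
  (SimpleGraph.Subgraph.isInduced_iff_exists_eq_induce_top _).mpr ⟨σ.L 0, rfl⟩

end CutTree

/-- For a labelled rooted tree `T` with at least two vertices
and underlying graph `G = U(T)`, the simplicial map `U : X^T → X^G` is not
relatively Segal: the square comparing the Segal maps
`(d₀, d₂) : X^T_2 → X^T_1 × X^T_1` and `(d₀, d₂) : X^G_2 → X^G_1 × X^G_1` via
`U` is not a pullback of sets. -/
theorem Umap_not_relatively_Segal (T : CutTree) (hT : 1 < Nat.card T.V) :
    ¬ ((Function.Injective fun σ : T.Simplex 2 =>
          ((T.face 0 σ, T.face 2 σ), T.Umap σ)) ∧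
      ∀ (a : T.Simplex 1 × T.Simplex 1) (b : GSimplex T.underlying 2),
        (T.Umap a.1, T.Umap a.2) = (GSimplex.face 0 b, GSimplex.face 2 b) →
          ∃ σ : T.Simplex 2, (T.face 0 σ, T.face 2 σ) = a ∧ T.Umap σ = b) := by
  rintro ⟨-, hlift⟩
  obtain ⟨u, w, huw⟩ := T.exists_covBy hT
  have hdisj : Disjoint (T.underlying.singletonSubgraph w).verts
      (T.underlying.singletonSubgraph u).verts := by
    simpa using huw.ne'
  obtain ⟨σ, -, hσ⟩ := hlift
    (T.ofAdmissible {u} (T.isAdmissible_singleton u),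
      T.ofAdmissible {w} (T.isAdmissible_singleton w))
    (GSimplex.ofDisjoint _ _ hdisj)
    (by rw [T.Umap_ofAdmissible_singleton, T.Umap_ofAdmissible_singleton,
      GSimplex.face_zero_ofDisjoint, GSimplex.face_two_ofDisjoint])
  have hind := T.isInduced_Umap σ
  rw [hσ] at hind
  exact SimpleGraph.Subgraph.not_isInduced_singletonSubgraph_sup
    (T.underlying_adj_of_covBy huw).symm hind
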